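/- For every a > 0, the probit surrogate function φ : ℝ → ℝ defined by φ(u) = log Φ(a·u), where Φ is the cumulative distribution function of the standard normal distribution, is strictly concave on ℝ, strictly monotone increasing on ℝ, differentiable on ℝ, and satisfies φ'(0) = a·√(2/π) > 0. -/

import Mathlib

/-!
The derivative of `log Φ` is `φ / Φ`, whose own derivative is `-φ (φ + t Φ) / Φ²`. Integrating
`φ' = -s φ` gives `φ(t) + t Φ(t) = ∫_{-∞}^t (t - s) φ(s) ds > 0`, so `φ / Φ` is strictly
decreasing and `log Φ` is strictly concave; both properties survive the substitution `t = a u`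
with `a > 0`. By symmetry of `φ`, `Φ(0) = 1/2`, so the derivative at `0` is
`a φ(0) / Φ(0) = 2a / √(2π) = a √(2/π)`.
-/

/-- The cumulative distribution function of the standard normal distribution,
`Φ(t) = ∫_{−∞}^{t} (1/√(2π))·exp(−s²/2) ds`. -/
noncomputable def stdNormalCDF (t : ℝ) : ℝ :=
  ∫ s in Set.Iic t, (Real.sqrt (2 * Real.pi))⁻¹ * Real.exp (-(s ^ 2) / 2)

open MeasureTheory ProbabilityTheory Real Set

noncomputable def stdNormalPDF : ℝ → ℝ := gaussianPDFReal 0 1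

lemma stdNormalPDF_apply (s : ℝ) : stdNormalPDF s = (√(2 * π))⁻¹ * exp (-(s ^ 2) / 2) := by
  simp [stdNormalPDF, gaussianPDFReal]

lemma stdNormalPDF_pos (s : ℝ) : 0 < stdNormalPDF s :=
  gaussianPDFReal_pos 0 1 s one_ne_zero

lemma stdNormalPDF_neg (s : ℝ) : stdNormalPDF (-s) = stdNormalPDF s := by
  simp only [stdNormalPDF_apply, neg_sq]

lemma continuous_stdNormalPDF : Continuous stdNormalPDF := by
  simp only [funext stdNormalPDF_apply]
  fun_prop

lemma integrable_stdNormalPDF : Integrable stdNormalPDF :=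
  integrable_gaussianPDFReal 0 1

lemma integral_stdNormalPDF : ∫ s, stdNormalPDF s = 1 :=
  integral_gaussianPDFReal_eq_one 0 one_ne_zero

lemma integrable_mul_stdNormalPDF : Integrable fun s ↦ s * stdNormalPDF s := by
  refine ((integrable_mul_exp_neg_mul_sq (b := 1 / 2) (by norm_num)).const_mul
    (√(2 * π))⁻¹).congr (.of_forall fun s ↦ ?_)
  simp only [stdNormalPDF_apply]
  ring_nf

lemma hasDerivAt_stdNormalPDF (s : ℝ) : HasDerivAt stdNormalPDF (-s * stdNormalPDF s) s := by
  simp only [funext stdNormalPDF_apply]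
  have h : HasDerivAt (fun x : ℝ ↦ -(x ^ 2) / 2) (-s) s :=
    (((hasDerivAt_pow 2 s).neg).div_const 2).congr_deriv (by push_cast; ring)
  exact (h.exp.const_mul _).congr_deriv (by ring)

lemma stdNormalCDF_eq_integral (t : ℝ) : stdNormalCDF t = ∫ s in Iic t, stdNormalPDF s := by
  simp only [stdNormalCDF, stdNormalPDF_apply]

lemma stdNormalCDF_pos (t : ℝ) : 0 < stdNormalCDF t := by
  rw [stdNormalCDF_eq_integral, setIntegral_pos_iff_support_of_nonneg_ae
    (.of_forall fun s ↦ (stdNormalPDF_pos s).le) integrable_stdNormalPDF.integrableOn,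
    Function.support_eq_univ fun s ↦ (stdNormalPDF_pos s).ne', univ_inter]
  simp

lemma hasDerivAt_stdNormalCDF (t : ℝ) : HasDerivAt stdNormalCDF (stdNormalPDF t) t := by
  have hΦ : stdNormalCDF = fun u ↦ stdNormalCDF 0 + ∫ s in (0 : ℝ)..u, stdNormalPDF s := by
    funext u
    rw [stdNormalCDF_eq_integral, stdNormalCDF_eq_integral, ← intervalIntegral.integral_Iic_sub_Iic
      integrable_stdNormalPDF.integrableOn integrable_stdNormalPDF.integrableOn]
    ring
  rw [hΦ]
  exact (intervalIntegral.integral_hasDerivAt_right integrable_stdNormalPDF.intervalIntegrable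
    (continuous_stdNormalPDF.stronglyMeasurableAtFilter _ _)
    continuous_stdNormalPDF.continuousAt).const_add _

lemma stdNormalCDF_zero : stdNormalCDF 0 = 1 / 2 := by
  have hsymm : ∫ s in Iic (0 : ℝ), stdNormalPDF s = ∫ s in Ioi (0 : ℝ), stdNormalPDF s := by
    simpa [stdNormalPDF_neg] using integral_comp_neg_Iic (0 : ℝ) stdNormalPDF
  have htotal := intervalIntegral.integral_Iic_add_Ioi (b := 0)
    integrable_stdNormalPDF.integrableOn integrable_stdNormalPDF.integrableOn
  rw [integral_stdNormalPDF, ← hsymm] at htotal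
  rw [stdNormalCDF_eq_integral]
  linarith

lemma setIntegral_Iic_mul_stdNormalPDF (t : ℝ) :
    ∫ s in Iic t, s * stdNormalPDF s = -stdNormalPDF t := by
  have hderiv : ∀ s ∈ Iic t, HasDerivAt (fun s ↦ -stdNormalPDF s) (s * stdNormalPDF s) s :=
    fun s _ ↦ (hasDerivAt_stdNormalPDF s).neg.congr_deriv (by ring)
  have hlim := tendsto_zero_of_hasDerivAt_of_integrableOn_Iic hderiv
    integrable_mul_stdNormalPDF.integrableOn integrable_stdNormalPDF.neg.integrableOn
  simpa using integral_Iic_of_hasDerivAt_of_tendsto' hderiv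
    integrable_mul_stdNormalPDF.integrableOn hlim

lemma setIntegral_Iic_sub_mul_stdNormalPDF (t : ℝ) :
    ∫ s in Iic t, (t - s) * stdNormalPDF s = stdNormalPDF t + t * stdNormalCDF t := by
  simp only [sub_mul]
  rw [integral_sub (integrable_stdNormalPDF.const_mul t).integrableOn
    integrable_mul_stdNormalPDF.integrableOn, integral_const_mul,
    setIntegral_Iic_mul_stdNormalPDF, stdNormalCDF_eq_integral]
  ring

lemma stdNormalPDF_add_mul_stdNormalCDF_pos (t : ℝ) :
    0 < stdNormalPDF t + t * stdNormalCDF t := by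
  have hint : IntegrableOn (fun s ↦ (t - s) * stdNormalPDF s) (Iic t) := by
    simp only [sub_mul]
    exact (integrable_stdNormalPDF.const_mul t).integrableOn.sub
      integrable_mul_stdNormalPDF.integrableOn
  have hnonneg : 0 ≤ᵐ[volume.restrict (Iic t)] fun s ↦ (t - s) * stdNormalPDF s :=
    (ae_restrict_iff' measurableSet_Iic).2 <| .of_forall fun s hs ↦
      mul_nonneg (sub_nonneg.2 hs) (stdNormalPDF_pos s).le
  have hsupp : Iio t ⊆ Function.support (fun s ↦ (t - s) * stdNormalPDF s) ∩ Iic t :=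
    fun s hs ↦ ⟨(mul_pos (sub_pos.2 hs) (stdNormalPDF_pos s)).ne', Iio_subset_Iic_self hs⟩
  rw [← setIntegral_Iic_sub_mul_stdNormalPDF, setIntegral_pos_iff_support_of_nonneg_ae hnonneg hint]
  exact (by simp : 0 < volume (Iio t)).trans_le (measure_mono hsupp)

lemma strictMono_stdNormalCDF : StrictMono stdNormalCDF :=
  strictMono_of_hasDerivAt_pos hasDerivAt_stdNormalCDF stdNormalPDF_pos

lemma hasDerivAt_log_stdNormalCDF (t : ℝ) :
    HasDerivAt (fun t ↦ log (stdNormalCDF t)) (stdNormalPDF t / stdNormalCDF t) t :=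
  (hasDerivAt_stdNormalCDF t).log (stdNormalCDF_pos t).ne'

lemma strictAnti_stdNormalPDF_div_stdNormalCDF :
    StrictAnti fun t ↦ stdNormalPDF t / stdNormalCDF t := by
  refine strictAnti_of_hasDerivAt_neg (fun t ↦ (hasDerivAt_stdNormalPDF t).div
    (hasDerivAt_stdNormalCDF t) (stdNormalCDF_pos t).ne') fun t ↦ ?_
  have key : -t * stdNormalPDF t * stdNormalCDF t - stdNormalPDF t * stdNormalPDF t =
      -(stdNormalPDF t * (stdNormalPDF t + t * stdNormalCDF t)) := by ring
  rw [key, neg_div]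
  exact neg_neg_of_pos (div_pos (mul_pos (stdNormalPDF_pos t)
    (stdNormalPDF_add_mul_stdNormalCDF_pos t)) (pow_pos (stdNormalCDF_pos t) 2))

lemma stdNormalPDF_zero_div_stdNormalCDF_zero : stdNormalPDF 0 / stdNormalCDF 0 = √(2 / π) := by
  rw [stdNormalCDF_zero, stdNormalPDF_apply, show (2 : ℝ) / π = 2 ^ 2 / (2 * π) by field_simp,
    sqrt_div' _ (by positivity), sqrt_sq zero_le_two]
  simp only [ne_eq, two_ne_zero, not_false_eq_true, zero_pow, neg_zero, zero_div, exp_zero,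
    mul_one]
  ring

lemma HasDerivAt.comp_const_mul {f : ℝ → ℝ} {f' a u : ℝ} (hf : HasDerivAt f f' (a * u)) :
    HasDerivAt (fun u ↦ f (a * u)) (a * f') u :=
  (hf.comp u ((hasDerivAt_id' u).const_mul a)).congr_deriv (by ring)

lemma StrictAnti.strictConcaveOn_univ_comp_mul {f f' : ℝ → ℝ} (hf : ∀ x, HasDerivAt f (f' x) x)
    (hf' : StrictAnti f') {a : ℝ} (ha : 0 < a) : StrictConcaveOn ℝ univ fun u ↦ f (a * u) := by
  have hcomp (u : ℝ) : HasDerivAt (fun u ↦ f (a * u)) (a * f' (a * u)) u :=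
    (hf (a * u)).comp_const_mul
  refine StrictAnti.strictConcaveOn_univ_of_deriv
    (continuous_iff_continuousAt.2 fun u ↦ (hcomp u).continuousAt) ?_
  rw [funext fun u ↦ (hcomp u).deriv]
  exact fun u v huv ↦ mul_lt_mul_of_pos_left (hf' (mul_lt_mul_of_pos_left huv ha)) ha

theorem probit_surrogate_properties (a : ℝ) (ha : 0 < a) :
    StrictConcaveOn ℝ Set.univ (fun u : ℝ => Real.log (stdNormalCDF (a * u))) ∧
    StrictMono (fun u : ℝ => Real.log (stdNormalCDF (a * u))) ∧
    Differentiable ℝ (fun u : ℝ => Real.log (stdNormalCDF (a * u))) ∧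
    deriv (fun u : ℝ => Real.log (stdNormalCDF (a * u))) 0 = a * Real.sqrt (2 / Real.pi) ∧
    0 < a * Real.sqrt (2 / Real.pi) := by
  have hderiv (u : ℝ) := (hasDerivAt_log_stdNormalCDF (a * u)).comp_const_mul
  refine ⟨strictAnti_stdNormalPDF_div_stdNormalCDF.strictConcaveOn_univ_comp_mul
      hasDerivAt_log_stdNormalCDF ha, fun u v huv ↦ ?_, fun u ↦ (hderiv u).differentiableAt,
    ?_, by positivity⟩
  · exact log_lt_log (stdNormalCDF_pos _) (strictMono_stdNormalCDF (mul_lt_mul_of_pos_left huv ha))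
  · rw [(hderiv 0).deriv, mul_zero, stdNormalPDF_zero_div_stdNormalCDF_zero]
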